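/- Let μ⁰ > 0, λ > 0 and c ∈ ℝⁿ. Let s⁰ be the unique minimizer over the positive orthant of (1/2)‖s − c‖² − μ⁰ Σᵢ log sᵢ, and set z⁰ = (s⁰ − c)/λ. Then every component of s⁰ is strictly positive, every component of z⁰ is strictly positive, s⁰ᵢ z⁰ᵢ = μ⁰/λ for every i, and ⟨s⁰, z⁰⟩ = n μ⁰/λ. -/

import Mathlib

/-- The smoothing objective for the nonnegative cone:
`f_μ(s) = (1/2)‖s − c‖² − μ Σᵢ log sᵢ`. -/
noncomputable def posOrthBarrierObj (n : ℕ) (μ : ℝ) (c : EuclideanSpace ℝ (Fin n))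
    (s : EuclideanSpace ℝ (Fin n)) : ℝ :=
  (1 / 2) * ‖s - c‖ ^ 2 - μ * ∑ i, Real.log (s i)

/-!
The objective is separable: it is a sum of the scalar barriers `½(sᵢ − cᵢ)² − μ log sᵢ`, and the
positive orthant is a product, so `s⁰ᵢ` minimizes the `i`-th scalar barrier on `(0, ∞)`. Its
first-order condition `s⁰ᵢ − cᵢ − μ/s⁰ᵢ = 0` reads `s⁰ᵢ (s⁰ᵢ − cᵢ) = μ`, which after dividing by
`λ` is exactly the central-path equation `s⁰ᵢ z⁰ᵢ = μ/λ`; positivity of `z⁰ᵢ` follows from it.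
-/

open Finset

theorem isMinOn_apply_of_forall_sum_le {ι α β : Type*} [Fintype ι] [DecidableEq ι]
    [AddCommMonoid β] [PartialOrder β] [IsOrderedCancelAddMonoid β]
    (f : ι → α → β) (S : Set α) (x : ι → α)
    (hx : ∀ y : ι → α, (∀ i, y i ∈ S) → ∑ i, f i (x i) ≤ ∑ i, f i (y i))
    (hxS : ∀ j, x j ∈ S) (i : ι) :
    IsMinOn (f i) S (x i) := fun t (ht : t ∈ S) => by
  have hupd : ∀ j, Function.update x i t j ∈ S := fun j => by
    rcases eq_or_ne j i with rfl | hj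
    · simpa using ht
    · simpa [Function.update_of_ne hj] using hxS j
  have h := hx _ hupd
  simp only [Function.apply_update f x i t] at h
  rw [sum_update_of_mem (mem_univ i), ← add_sum_erase _ _ (mem_univ i),
    ← sdiff_singleton_eq_erase] at h
  exact le_of_add_le_add_right h

namespace PosOrthBarrier

noncomputable def term (μ a t : ℝ) : ℝ :=
  (1 / 2) * (t - a) ^ 2 - μ * Real.log t

theorem posOrthBarrierObj_eq_sum_term (n : ℕ) (μ : ℝ) (c s : EuclideanSpace ℝ (Fin n)) :
    posOrthBarrierObj n μ c s = ∑ i, term μ (c i) (s i) := by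
  rw [posOrthBarrierObj, EuclideanSpace.norm_eq, Real.sq_sqrt (by positivity), mul_sum,
    mul_sum, ← sum_sub_distrib]
  simp [term, sq_abs]

theorem hasDerivAt_term (μ a : ℝ) {t : ℝ} (ht : t ≠ 0) :
    HasDerivAt (term μ a) (t - a - μ / t) t := by
  refine (((((hasDerivAt_id' t).sub_const a).pow 2).const_mul (1 / 2 : ℝ)).sub
    ((Real.hasDerivAt_log ht).const_mul μ)).congr_deriv ?_
  simp only [Nat.cast_ofNat, mul_one]
  ring

theorem mul_sub_eq_of_isMinOn_term {μ a t₀ : ℝ} (ht₀ : 0 < t₀)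
    (hmin : IsMinOn (term μ a) (Set.Ioi 0) t₀) :
    t₀ * (t₀ - a) = μ := by
  have hcrit : t₀ - a - μ / t₀ = 0 :=
    (hmin.isLocalMin (Ioi_mem_nhds ht₀)).hasDerivAt_eq_zero (hasDerivAt_term μ a ht₀.ne')
  field_simp at hcrit
  linarith

theorem mul_sub_eq_of_isMinOn_posOrthBarrierObj {n : ℕ} {μ : ℝ} {c s₀ : EuclideanSpace ℝ (Fin n)}
    (hpos : ∀ i, 0 < s₀ i)
    (hmin : ∀ s : EuclideanSpace ℝ (Fin n), (∀ i, 0 < s i) →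
      posOrthBarrierObj n μ c s₀ ≤ posOrthBarrierObj n μ c s)
    (i : Fin n) : s₀ i * (s₀ i - c i) = μ := by
  refine mul_sub_eq_of_isMinOn_term (hpos i) fun t (ht : 0 < t) => ?_
  refine isMinOn_apply_of_forall_sum_le (fun j => term μ (c j)) (Set.Ioi 0) s₀ (fun y hy => ?_)
    hpos i ht
  simpa only [posOrthBarrierObj_eq_sum_term] using hmin (WithLp.toLp 2 y) hy

end PosOrthBarrier

/-- Let `μ⁰ > 0`, `λ > 0`, `c ∈ ℝⁿ`, let `s⁰` be the (unique) minimizer of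
`(1/2)‖s − c‖² − μ⁰ Σᵢ log sᵢ` over the positive orthant, and `z⁰ = (s⁰ − c)/λ`.
Then every component of `s⁰` and of `z⁰` is strictly positive,
`s⁰ᵢ z⁰ᵢ = μ⁰/λ` for every `i`, and `⟨s⁰, z⁰⟩ = n μ⁰/λ`. -/
theorem stmt6 (n : ℕ) (μ0 lam : ℝ) (hμ : 0 < μ0) (hlam : 0 < lam)
    (c s0 : EuclideanSpace ℝ (Fin n))
    (hpos : ∀ i, 0 < s0 i)
    (hmin : ∀ s : EuclideanSpace ℝ (Fin n), (∀ i, 0 < s i) →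
      posOrthBarrierObj n μ0 c s0 ≤ posOrthBarrierObj n μ0 c s) :
    let z0 : EuclideanSpace ℝ (Fin n) := lam⁻¹ • (s0 - c)
    (∀ i, 0 < s0 i) ∧ (∀ i, 0 < z0 i) ∧ (∀ i, s0 i * z0 i = μ0 / lam) ∧
    ∑ i, s0 i * z0 i = n * μ0 / lam := by
  intro z0
  have hz0 : ∀ i, z0 i = (s0 i - c i) / lam := fun i => by simp [z0, div_eq_inv_mul]
  have hcentral := PosOrthBarrier.mul_sub_eq_of_isMinOn_posOrthBarrierObj hpos hmin
  have hprod : ∀ i, s0 i * z0 i = μ0 / lam := fun i => by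
    rw [hz0, mul_div_assoc', hcentral]
  have hzpos : ∀ i, 0 < z0 i := fun i => by
    rw [hz0]
    exact div_pos (pos_of_mul_pos_right (hcentral i ▸ hμ) (hpos i).le) hlam
  refine ⟨hpos, hzpos, hprod, ?_⟩
  simp [hprod, mul_div_assoc]
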